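/- Let G, A, B be finite groups, with B acting on a finite set 𝓑. Then the number of group homomorphisms from G to A ≀ B equals the sum, over all group homomorphisms φ : G → B, of |A|^(|𝓑| − r(φ)) times the product over the r(φ) orbits of the φ-action of G on 𝓑 (with chosen orbit representatives b₁, …, b_{r(φ)}) of the number of group homomorphisms from S_i = φ⁻¹(Stab_B(b_i)) to A; that is, |Hom(G, A ≀ B)| = Σ_{φ : G → B} |A|^(|𝓑| − r(φ)) · Π_{i=1}^{r(φ)} |Hom(S_i, A)|. The value does not depend on the choice of orbit representatives. -/

import Mathlib

/-!
A homomorphism `G →* (𝓑 → A) ⋊ B` is a homomorphism `φ : G →* B` together with a crossed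
homomorphism `F : G → (𝓑 → A)` for the coordinate-permuting action of `G` on `𝓑 → A` induced
by `φ`, i.e. `F (g * h) x = F g x * F h (g⁻¹ • x)`.

Fix orbit representatives and a section `s : 𝓑 → G` with `s x • rep ⟦x⟧ = x` and
`s (rep ω) = 1`. Then `t g x = (s x)⁻¹ * g * s (g⁻¹ • x)` lies in the stabilizer of `rep ⟦x⟧`,
and a crossed homomorphism is the same as a choice, made independently, of homomorphisms
`ρ ω : Stab (rep ω) →* A` (the restrictions `g ↦ F g (rep ω)`) and of a function `α : 𝓑 → A`
that is `1` on the representatives (`α x = F (s x) x`), through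
`F g x = α x * ρ ⟦x⟧ (t g x) * (α (g⁻¹ • x))⁻¹`.
Counting the pairs `(ρ, α)` gives `|A| ^ (|𝓑| - r(φ)) * ∏ ω, |Hom(Stab (rep ω), A)|`.
-/

/-- The automorphism action of `B` on functions `𝓑 → A`, given by
`(b • f) j = f (b⁻¹ • j)`. -/
def wreathAut (A B 𝓑 : Type*) [Group A] [Group B] [MulAction B 𝓑] :
    B →* MulAut (𝓑 → A) where
  toFun b :=
    { toFun := fun f j => f (b⁻¹ • j)
      invFun := fun f j => f (b • j)
      left_inv := fun f => by funext j; simp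
      right_inv := fun f => by funext j; simp
      map_mul' := fun f g => rfl }
  map_one' := by ext f j; simp
  map_mul' b₁ b₂ := by ext f j; simp [mul_smul]

/-- The wreath product `A ≀ B`, with `B` acting on the finite set `𝓑`:
the semidirect product `(𝓑 → A) ⋊ B`. -/
abbrev WreathProduct (A B 𝓑 : Type*) [Group A] [Group B] [MulAction B 𝓑] : Type _ :=
  SemidirectProduct (𝓑 → A) B (wreathAut A B 𝓑)

/-- The set of orbits of the action of `G` on `𝓑` induced by `φ : G →* B`. -/
def orbitQuot {G B : Type*} (𝓑 : Type*) [Group G] [Group B] [MulAction B 𝓑]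
    (φ : G →* B) : Type _ :=
  letI : MulAction G 𝓑 := MulAction.compHom 𝓑 φ
  MulAction.orbitRel.Quotient G 𝓑

/-- The orbit (for the action of `G` on `𝓑` induced by `φ`) of an element of `𝓑`. -/
def orbitQuotMk {G B : Type*} (𝓑 : Type*) [Group G] [Group B] [MulAction B 𝓑]
    (φ : G →* B) (x : 𝓑) : orbitQuot 𝓑 φ :=
  letI : MulAction G 𝓑 := MulAction.compHom 𝓑 φ
  Quotient.mk'' x

open MulAction

namespace SemidirectProduct

variable {G N H : Type*} [Group G] [Group N] [Group H] {φ : H →* MulAut N}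

def monoidHomEquiv :
    (G →* N ⋊[φ] H) ≃
      Σ ψ : G →* H, {f : G → N // ∀ g g', f (g * g') = f g * φ (ψ g) (f g')} where
  toFun χ := ⟨rightHom.comp χ, fun g => (χ g).left, fun g g' => by
    show (χ (g * g')).left = _
    rw [map_mul]
    rfl⟩
  invFun p :=
    { toFun g := ⟨p.2.1 g, p.1 g⟩
      map_one' := by
        have h := p.2.2 1 1
        simp only [mul_one, map_one, MulAut.one_apply, left_eq_mul] at h
        ext <;> simp [h]
      map_mul' g g' := by ext <;> simp [p.2.2 g g'] }
  left_inv χ := by ext <;> rfl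
  right_inv p := rfl

end SemidirectProduct

lemma Nat.card_subtype_apply_eq_one_of_injective {X ι A : Type*} [Finite X] [One A]
    {r : ι → X} (hr : Function.Injective r) :
    Nat.card {α : X → A // ∀ i, α (r i) = 1} = Nat.card A ^ (Nat.card X - Nat.card ι) := by
  classical
  have e : {α : X → A // ∀ i, α (r i) = 1} ≃ (↥(Set.range r)ᶜ → A) :=
    (Equiv.subtypeEquivRight fun α => by simp [funext_iff]).trans
      (Equiv.subtypePreimage (· ∈ Set.range r) (1 : Set.range r → A))
  rw [Nat.card_congr e, Nat.card_fun, Nat.card_coe_set_eq, Set.ncard_compl,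
    ← Nat.card_coe_set_eq, Nat.card_range_of_injective hr]

namespace MonoidHom

variable {G A : Type*} [Group G] [Group A] {H : Subgroup G} (f : H →* A)

/-- Unlike `f`, its type does not depend on `H`, which lets `WreathCocycle.ofProd` rewrite
`⟦g⁻¹ • x⟧` to `⟦x⟧` under `ρ`. -/
noncomputable def extendOne : G → A :=
  Function.extend Subtype.val f 1

lemma extendOne_of_mem {a : G} (ha : a ∈ H) : f.extendOne a = f ⟨a, ha⟩ :=
  Subtype.val_injective.extend_apply f 1 ⟨a, ha⟩

lemma extendOne_mul {a b : G} (ha : a ∈ H) (hb : b ∈ H) :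
    f.extendOne (a * b) = f.extendOne a * f.extendOne b := by
  rw [f.extendOne_of_mem ha, f.extendOne_of_mem hb, f.extendOne_of_mem (mul_mem ha hb),
    ← map_mul]
  rfl

end MonoidHom

namespace MulAction

variable {G X : Type*} [Group G] [MulAction G X] {rep : orbitRel.Quotient G X → X}
  (hrep : ∀ ω, ⟦rep ω⟧ = ω)
include hrep

lemma exists_smul_rep_eq (x : X) : ∃ g : G, g • rep ⟦x⟧ = x :=
  Quotient.exact (hrep ⟦x⟧).symm

open Classical in
noncomputable def orbitSection (x : X) : G :=
  if x = rep ⟦x⟧ then 1 else (exists_smul_rep_eq hrep x).choose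

lemma orbitSection_smul (x : X) : orbitSection hrep x • rep ⟦x⟧ = x := by
  unfold orbitSection
  split_ifs with h
  · exact (one_smul G _).trans h.symm
  · exact (exists_smul_rep_eq hrep x).choose_spec

lemma orbitSection_rep (ω : orbitRel.Quotient G X) : orbitSection hrep (rep ω) = 1 := by
  rw [orbitSection, if_pos (by rw [hrep])]

lemma inv_orbitSection_smul (x : X) : (orbitSection hrep x)⁻¹ • x = rep ⟦x⟧ :=
  inv_smul_eq_iff.mpr (orbitSection_smul hrep x).symm

noncomputable def sectionCocycle (g : G) (x : X) : G :=
  (orbitSection hrep x)⁻¹ * g * orbitSection hrep (g⁻¹ • x)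

lemma sectionCocycle_mem_stabilizer (g : G) (x : X) :
    sectionCocycle hrep g x ∈ stabilizer G (rep ⟦x⟧) := by
  have h := orbitSection_smul hrep (g⁻¹ • x)
  rw [orbitRel.Quotient.quotient_smul_eq] at h
  rw [mem_stabilizer_iff, sectionCocycle, mul_smul, mul_smul, h, smul_inv_smul,
    inv_orbitSection_smul]

lemma sectionCocycle_mul (g h : G) (x : X) :
    sectionCocycle hrep (g * h) x =
      sectionCocycle hrep g x * sectionCocycle hrep h (g⁻¹ • x) := by
  simp only [sectionCocycle, mul_inv_rev, mul_smul]
  group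

lemma sectionCocycle_of_mem_stabilizer {ω : orbitRel.Quotient G X} {g : G}
    (hg : g ∈ stabilizer G (rep ω)) : sectionCocycle hrep g (rep ω) = g := by
  rw [sectionCocycle, inv_smul_eq_iff.mpr (mem_stabilizer_iff.mp hg).symm, orbitSection_rep,
    inv_one, one_mul, mul_one]

lemma sectionCocycle_orbitSection (x : X) : sectionCocycle hrep (orbitSection hrep x) x = 1 := by
  rw [sectionCocycle, inv_orbitSection_smul, orbitSection_rep, inv_mul_cancel, mul_one]

lemma orbitSection_mul_sectionCocycle (g : G) (x : X) :
    orbitSection hrep x * sectionCocycle hrep g x = g * orbitSection hrep (g⁻¹ • x) := by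
  rw [sectionCocycle, mul_assoc, mul_inv_cancel_left]

end MulAction

structure WreathCocycle (G X A : Type*) [Group G] [MulAction G X] [Group A] where
  toFun : G → X → A
  map_mul' : ∀ g h x, toFun (g * h) x = toFun g x * toFun h (g⁻¹ • x)

namespace WreathCocycle

variable {G X A : Type*} [Group G] [MulAction G X] [Group A]

instance : FunLike (WreathCocycle G X A) G (X → A) where
  coe := toFun
  coe_injective F F' h := by cases F; cases F'; congr

@[ext]
lemma ext {F F' : WreathCocycle G X A} (h : ∀ g x, F g x = F' g x) : F = F' :=
  DFunLike.ext _ _ fun g => funext (h g)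

lemma map_mul (F : WreathCocycle G X A) (g h : G) (x : X) :
    F (g * h) x = F g x * F h (g⁻¹ • x) :=
  F.map_mul' g h x

lemma map_one (F : WreathCocycle G X A) (x : X) : F 1 x = 1 := by
  simpa using F.map_mul 1 1 x

def restrict (F : WreathCocycle G X A) (x : X) : stabilizer G x →* A where
  toFun g := F g x
  map_one' := F.map_one x
  map_mul' g h := by
    rw [Subgroup.coe_mul, F.map_mul, inv_smul_eq_iff.mpr (mem_stabilizer_iff.mp g.2).symm]

section Representatives

variable {rep : orbitRel.Quotient G X → X} (hrep : ∀ ω, ⟦rep ω⟧ = ω)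
include hrep

lemma apply_eq_sectionCocycle (F : WreathCocycle G X A) (g : G) (x : X) :
    F g x = F (orbitSection hrep x) x * F (sectionCocycle hrep g x) (rep ⟦x⟧) *
      (F (orbitSection hrep (g⁻¹ • x)) (g⁻¹ • x))⁻¹ := by
  have h := F.map_mul (orbitSection hrep x) (sectionCocycle hrep g x) x
  rw [inv_orbitSection_smul, orbitSection_mul_sectionCocycle, F.map_mul] at h
  rw [← h, mul_inv_cancel_right]

noncomputable def ofProd (ρ : ∀ ω, stabilizer G (rep ω) →* A) (α : X → A) :
    WreathCocycle G X A where
  toFun g x := α x * (ρ ⟦x⟧).extendOne (sectionCocycle hrep g x) * (α (g⁻¹ • x))⁻¹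
  map_mul' g h x := by
    have hh := sectionCocycle_mem_stabilizer hrep h (g⁻¹ • x)
    rw [orbitRel.Quotient.quotient_smul_eq] at hh ⊢
    rw [sectionCocycle_mul, (ρ _).extendOne_mul (sectionCocycle_mem_stabilizer hrep g x) hh,
      mul_inv_rev, mul_smul]
    group

@[simp]
lemma ofProd_apply (ρ : ∀ ω, stabilizer G (rep ω) →* A) (α : X → A) (g : G) (x : X) :
    ofProd hrep ρ α g x =
      α x * (ρ ⟦x⟧).extendOne (sectionCocycle hrep g x) * (α (g⁻¹ • x))⁻¹ :=
  rfl

noncomputable def equivProd :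
    WreathCocycle G X A ≃
      (∀ ω, stabilizer G (rep ω) →* A) × {α : X → A // ∀ ω, α (rep ω) = 1} where
  toFun F := (fun ω => F.restrict (rep ω),
    ⟨fun x => F (orbitSection hrep x) x, fun ω =>
      show F (orbitSection hrep (rep ω)) (rep ω) = 1 by rw [orbitSection_rep, F.map_one]⟩)
  invFun p := ofProd hrep p.1 p.2.1
  left_inv F := by
    ext g x
    rw [ofProd_apply, MonoidHom.extendOne_of_mem _ (sectionCocycle_mem_stabilizer hrep g x),
      apply_eq_sectionCocycle hrep F g x]
    rfl
  right_inv := fun ⟨ρ, α, hα⟩ => by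
    refine Prod.ext (funext fun ω => MonoidHom.ext fun g => ?_)
      (Subtype.ext (funext fun x => ?_))
    · have hg : (g : G)⁻¹ • rep ω = rep ω :=
        inv_smul_eq_iff.mpr (mem_stabilizer_iff.mp g.2).symm
      change ofProd hrep ρ α g (rep ω) = ρ ω g
      rw [ofProd_apply, hrep, sectionCocycle_of_mem_stabilizer hrep g.2,
        MonoidHom.extendOne_of_mem _ g.2, hg, hα]
      simp
    · change ofProd hrep ρ α _ x = α x
      rw [ofProd_apply, sectionCocycle_orbitSection, inv_orbitSection_smul, hα,
        MonoidHom.extendOne_of_mem _ (one_mem _), inv_one, mul_one]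
      exact mul_eq_left.mpr (ρ ⟦x⟧).map_one

theorem card_eq [Finite X] :
    Nat.card (WreathCocycle G X A) =
      Nat.card A ^ (Nat.card X - Nat.card (orbitRel.Quotient G X)) *
        ∏ᶠ ω, Nat.card (stabilizer G (rep ω) →* A) := by
  have := Fintype.ofFinite (orbitRel.Quotient G X)
  rw [Nat.card_congr (equivProd hrep), Nat.card_prod, Nat.card_pi, finprod_eq_prod_of_fintype,
    mul_comm, Nat.card_subtype_apply_eq_one_of_injective (Function.LeftInverse.injective hrep)]

end Representatives

end WreathCocycle

section WreathProduct

variable {G A B 𝓑 : Type*} [Group G] [Group A] [Group B] [MulAction B 𝓑]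

lemma wreathAut_apply (b : B) (f : 𝓑 → A) (j : 𝓑) : wreathAut A B 𝓑 b f j = f (b⁻¹ • j) :=
  rfl

def wreathCocycleEquiv (φ : G →* B) :
    letI := MulAction.compHom 𝓑 φ
    WreathCocycle G 𝓑 A ≃
      {f : G → 𝓑 → A // ∀ g h, f (g * h) = f g * wreathAut A B 𝓑 (φ g) (f h)} :=
  letI := MulAction.compHom 𝓑 φ
  { toFun F := ⟨F, fun g h => funext fun x => by
      rw [F.map_mul, Pi.mul_apply, wreathAut_apply, compHom_smul_def, map_inv]⟩
    invFun f := ⟨f, fun g h x => by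
      rw [f.2, Pi.mul_apply, wreathAut_apply, compHom_smul_def, map_inv]⟩
    left_inv _ := rfl
    right_inv _ := rfl }

end WreathProduct

/-- For finite groups `G`, `A`, `B` with `B` acting on a finite set `𝓑`,
`|Hom(G, A ≀ B)| = Σ_{φ : G →* B} |A|^(|𝓑| - r(φ)) · Π_ω |Hom(φ⁻¹(Stab_B (rep φ ω)), A)|`,
for any choice `rep` of orbit representatives (in particular the value of the right-hand
side does not depend on this choice). -/
theorem card_hom_wreathProduct
    {G A B 𝓑 : Type*} [Group G] [Group A] [Group B] [Finite G] [Finite A] [Finite B]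
    [MulAction B 𝓑] [Finite 𝓑]
    (rep : ∀ φ : G →* B, orbitQuot 𝓑 φ → 𝓑)
    (hrep : ∀ (φ : G →* B) (ω : orbitQuot 𝓑 φ), orbitQuotMk 𝓑 φ (rep φ ω) = ω) :
    Nat.card (G →* WreathProduct A B 𝓑) =
      ∑ᶠ φ : G →* B,
        Nat.card A ^ (Nat.card 𝓑 - Nat.card (orbitQuot 𝓑 φ)) *
          ∏ᶠ ω : orbitQuot 𝓑 φ,
            Nat.card (↥((MulAction.stabilizer B (rep φ ω)).comap φ) →* A) := by
  have : Finite (G →* B) := Finite.of_injective _ DFunLike.coe_injective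
  have := Fintype.ofFinite (G →* B)
  rw [Nat.card_congr SemidirectProduct.monoidHomEquiv, Nat.card_sigma, finsum_eq_sum_of_fintype]
  refine Finset.sum_congr rfl fun φ _ => ?_
  let := MulAction.compHom 𝓑 φ
  rw [← Nat.card_congr (wreathCocycleEquiv φ)]
  exact WreathCocycle.card_eq (hrep φ)
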